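/- arXiv:1306.6943 — 5 statements merged into one kernel-verified Lean document; each statement's English description precedes it below -/
import Mathlib

section
/- Lemma 1: The minimum value H* of the Ising Hamiltonian H(S) on the Chimera graph G_r satisfies H* ≤ −(A_0 + A_1), where A_0 = Σ_{(u,v)∈E_0}|c_{uv}| and A_1 = Σ_{(u,v)∈E_1}|c_{uv}|. -/
open Finset

abbrev ChimeraVertex (r : ℕ) := Fin r × Fin r × Fin 4 × Fin 2

def lowRow {r : ℕ} (i : Fin (r - 1)) : Fin r := ⟨i.val, by have := i.isLt; omega⟩

def highRow {r : ℕ} (i : Fin (r - 1)) : Fin r := ⟨i.val + 1, by have := i.isLt; omega⟩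

/-- `S` is a valid spin assignment, i.e. takes values in `{-1, 1}`. -/
def IsPM {r : ℕ} (S : ChimeraVertex r → ℝ) : Prop := ∀ v, S v = 1 ∨ S v = -1

/-- The Ising Hamiltonian on the Chimera graph `G_r`. -/
def IsingH {r : ℕ} (c0 : Fin (r - 1) → Fin r → Fin 4 → ℝ)
    (c1 : Fin r → Fin (r - 1) → Fin 4 → ℝ)
    (c01 : Fin r → Fin r → Fin 4 → Fin 4 → ℝ)
    (d : ChimeraVertex r → ℝ) (S : ChimeraVertex r → ℝ) : ℝ :=
  (∑ i, ∑ j, ∑ k, c0 i j k * (S (lowRow i, j, k, 0) * S (highRow i, j, k, 0)))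
    + (∑ i, ∑ j, ∑ k, c1 i j k * (S (i, lowRow j, k, 1) * S (i, highRow j, k, 1)))
    + (∑ i, ∑ j, ∑ k0, ∑ k1, c01 i j k0 k1 * (S (i, j, k0, 0) * S (i, j, k1, 1)))
    + (∑ v, d v * S v)


/-!
The edges of `E_0` and `E_1` form vertex-disjoint paths (one per column `(·, j, k, 0)` and one per
row `(i, ·, k, 1)`), so spins can be chosen along each path to satisfy every one of its edges,
giving chain energy `-(A_0 + A_1)`. Flipping all `l = 0` spins by `σ` and all `l = 1` spins by `τ`
keeps the chain energy and turns the remaining terms into `σ τ B + σ D_0 + τ D_1`; these average to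
zero over the four sign choices, so one of the four configurations has energy at most
`-(A_0 + A_1)`.
-/

noncomputable def alignedSpins (c : ℕ → ℝ) : ℕ → ℝ
  | 0 => 1
  | n + 1 => alignedSpins c n * (if 0 ≤ c n then -1 else 1)

lemma alignedSpins_eq_one_or_neg_one (c : ℕ → ℝ) (n : ℕ) :
    alignedSpins c n = 1 ∨ alignedSpins c n = -1 := by
  induction n with
  | zero => exact Or.inl rfl
  | succ n ih =>
    rw [alignedSpins]
    rcases ih with h | h <;> rw [h] <;> split_ifs <;> norm_num

lemma alignedSpins_mul_self (c : ℕ → ℝ) (n : ℕ) : alignedSpins c n * alignedSpins c n = 1 :=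
  mul_self_eq_one_iff.mpr (alignedSpins_eq_one_or_neg_one c n)

lemma mul_alignedSpins_mul_succ (c : ℕ → ℝ) (n : ℕ) :
    c n * (alignedSpins c n * alignedSpins c (n + 1)) = -|c n| := by
  rw [alignedSpins, ← mul_assoc (alignedSpins c n), alignedSpins_mul_self, one_mul]
  split_ifs with h
  · rw [abs_of_nonneg h, mul_neg_one]
  · rw [abs_of_neg (not_le.mp h), mul_one, neg_neg]

lemma mul_eq_one_or_neg_one {a b : ℝ} (ha : a = 1 ∨ a = -1) (hb : b = 1 ∨ b = -1) :
    a * b = 1 ∨ a * b = -1 := by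
  rcases ha with rfl | rfl <;> rcases hb with rfl | rfl <;> norm_num

lemma le_of_forall_signs_le {m e a b c : ℝ}
    (h : ∀ σ τ : ℝ, (σ = 1 ∨ σ = -1) → (τ = 1 ∨ τ = -1) → m ≤ e + σ * τ * a + σ * b + τ * c) :
    m ≤ e := by
  have h₁ := h 1 1 (.inl rfl) (.inl rfl)
  have h₂ := h 1 (-1) (.inl rfl) (.inr rfl)
  have h₃ := h (-1) 1 (.inr rfl) (.inl rfl)
  have h₄ := h (-1) (-1) (.inr rfl) (.inr rfl)
  linarith

namespace Chimera

variable {r : ℕ}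

def chainEnergy (c0 : Fin (r - 1) → Fin r → Fin 4 → ℝ) (c1 : Fin r → Fin (r - 1) → Fin 4 → ℝ)
    (S : ChimeraVertex r → ℝ) : ℝ :=
  (∑ i, ∑ j, ∑ k, c0 i j k * (S (lowRow i, j, k, 0) * S (highRow i, j, k, 0)))
    + (∑ i, ∑ j, ∑ k, c1 i j k * (S (i, lowRow j, k, 1) * S (i, highRow j, k, 1)))

def couplerEnergy (c01 : Fin r → Fin r → Fin 4 → Fin 4 → ℝ) (S : ChimeraVertex r → ℝ) : ℝ :=
  ∑ i, ∑ j, ∑ k0, ∑ k1, c01 i j k0 k1 * (S (i, j, k0, 0) * S (i, j, k1, 1))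

def fieldEnergy (d : ChimeraVertex r → ℝ) (l : Fin 2) (S : ChimeraVertex r → ℝ) : ℝ :=
  ∑ i, ∑ j, ∑ k, d (i, j, k, l) * S (i, j, k, l)

lemma isingH_eq_chainEnergy_add (c0 : Fin (r - 1) → Fin r → Fin 4 → ℝ)
    (c1 : Fin r → Fin (r - 1) → Fin 4 → ℝ)
    (c01 : Fin r → Fin r → Fin 4 → Fin 4 → ℝ) (d : ChimeraVertex r → ℝ)
    (S : ChimeraVertex r → ℝ) :
    IsingH c0 c1 c01 d S =
      chainEnergy c0 c1 S + couplerEnergy c01 S + fieldEnergy d 0 S + fieldEnergy d 1 S := by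
  simp only [IsingH, chainEnergy, couplerEnergy, fieldEnergy, Fintype.sum_prod_type,
    Fin.sum_univ_two, Finset.sum_add_distrib]
  ring

def flipLayers (σ τ : ℝ) (S : ChimeraVertex r → ℝ) (v : ChimeraVertex r) : ℝ :=
  (if v.2.2.2 = 0 then σ else τ) * S v

lemma isPM_flipLayers {σ τ : ℝ} (hσ : σ = 1 ∨ σ = -1) (hτ : τ = 1 ∨ τ = -1)
    {S : ChimeraVertex r → ℝ} (hS : IsPM S) : IsPM (flipLayers σ τ S) := fun v => by
  unfold flipLayers
  split_ifs
  exacts [mul_eq_one_or_neg_one hσ (hS v), mul_eq_one_or_neg_one hτ (hS v)]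

variable (S : ChimeraVertex r → ℝ)

lemma chainEnergy_flipLayers {σ τ : ℝ} (hσ : σ * σ = 1) (hτ : τ * τ = 1)
    (c0 : Fin (r - 1) → Fin r → Fin 4 → ℝ) (c1 : Fin r → Fin (r - 1) → Fin 4 → ℝ) :
    chainEnergy c0 c1 (flipLayers σ τ S) = chainEnergy c0 c1 S := by
  simp only [chainEnergy, flipLayers, if_true, one_ne_zero, if_false,
    mul_mul_mul_comm σ, mul_mul_mul_comm τ, hσ, hτ, one_mul]

lemma couplerEnergy_flipLayers (σ τ : ℝ) (c01 : Fin r → Fin r → Fin 4 → Fin 4 → ℝ) :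
    couplerEnergy c01 (flipLayers σ τ S) = σ * τ * couplerEnergy c01 S := by
  simp only [couplerEnergy, flipLayers, if_true, one_ne_zero, if_false,
    Finset.mul_sum, mul_mul_mul_comm σ, mul_left_comm _ (σ * τ)]

lemma fieldEnergy_zero_flipLayers (σ τ : ℝ) (d : ChimeraVertex r → ℝ) :
    fieldEnergy d 0 (flipLayers σ τ S) = σ * fieldEnergy d 0 S := by
  simp only [fieldEnergy, flipLayers, if_true, Finset.mul_sum, mul_left_comm]

lemma fieldEnergy_one_flipLayers (σ τ : ℝ) (d : ChimeraVertex r → ℝ) :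
    fieldEnergy d 1 (flipLayers σ τ S) = τ * fieldEnergy d 1 S := by
  simp only [fieldEnergy, flipLayers, one_ne_zero, if_false, Finset.mul_sum, mul_left_comm]

def extendByZero {n : ℕ} (c : Fin n → ℝ) (m : ℕ) : ℝ := if h : m < n then c ⟨m, h⟩ else 0

noncomputable def alignedConfig (c0 : Fin (r - 1) → Fin r → Fin 4 → ℝ)
    (c1 : Fin r → Fin (r - 1) → Fin 4 → ℝ) : ChimeraVertex r → ℝ :=
  fun (i, j, k, l) =>
    if l = 0 then alignedSpins (extendByZero fun m => c0 m j k) i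
    else alignedSpins (extendByZero fun m => c1 i m k) j

lemma isPM_alignedConfig (c0 : Fin (r - 1) → Fin r → Fin 4 → ℝ)
    (c1 : Fin r → Fin (r - 1) → Fin 4 → ℝ) : IsPM (alignedConfig c0 c1) := by
  rintro ⟨i, j, k, l⟩
  dsimp only [alignedConfig]
  split_ifs <;> exact alignedSpins_eq_one_or_neg_one _ _

lemma mul_alignedSpins_extendByZero {n : ℕ} (c : Fin n → ℝ) (m : Fin n) :
    c m * (alignedSpins (extendByZero c) m * alignedSpins (extendByZero c) (m + 1)) = -|c m| := by
  simpa [extendByZero] using mul_alignedSpins_mul_succ (extendByZero c) m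

lemma chainEnergy_alignedConfig (c0 : Fin (r - 1) → Fin r → Fin 4 → ℝ)
    (c1 : Fin r → Fin (r - 1) → Fin 4 → ℝ) :
    chainEnergy c0 c1 (alignedConfig c0 c1) =
      -((∑ i, ∑ j, ∑ k, |c0 i j k|) + (∑ i, ∑ j, ∑ k, |c1 i j k|)) := by
  simp only [chainEnergy, alignedConfig, if_true, one_ne_zero, if_false, lowRow, highRow, neg_add,
    ← Finset.sum_neg_distrib]
  congr 1 <;> refine Fintype.sum_congr _ _ fun i => Fintype.sum_congr _ _ fun j =>
    Fintype.sum_congr _ _ fun k => ?_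
  exacts [mul_alignedSpins_extendByZero (c0 · j k) i, mul_alignedSpins_extendByZero (c1 i · k) j]

end Chimera

open Chimera in
theorem stmt2_general (r : ℕ)
    (c0 : Fin (r - 1) → Fin r → Fin 4 → ℝ)
    (c1 : Fin r → Fin (r - 1) → Fin 4 → ℝ)
    (c01 : Fin r → Fin r → Fin 4 → Fin 4 → ℝ)
    (d : ChimeraVertex r → ℝ)
    (Sopt : ChimeraVertex r → ℝ)
    (hmin : ∀ S : ChimeraVertex r → ℝ, IsPM S →
      IsingH c0 c1 c01 d Sopt ≤ IsingH c0 c1 c01 d S) :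
    IsingH c0 c1 c01 d Sopt ≤
      -((∑ i, ∑ j, ∑ k, |c0 i j k|) + (∑ i, ∑ j, ∑ k, |c1 i j k|)) := by
  set S := alignedConfig c0 c1
  rw [← chainEnergy_alignedConfig c0 c1]
  refine le_of_forall_signs_le (a := couplerEnergy c01 S) (b := fieldEnergy d 0 S)
    (c := fieldEnergy d 1 S) fun σ τ hσ hτ => ?_
  calc IsingH c0 c1 c01 d Sopt
      ≤ IsingH c0 c1 c01 d (flipLayers σ τ S) :=
        hmin _ (isPM_flipLayers hσ hτ (isPM_alignedConfig c0 c1))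
    _ = _ := by
      rw [isingH_eq_chainEnergy_add, chainEnergy_flipLayers _ (mul_self_eq_one_iff.mpr hσ)
        (mul_self_eq_one_iff.mpr hτ), couplerEnergy_flipLayers,
        fieldEnergy_zero_flipLayers, fieldEnergy_one_flipLayers]

/-- Lemma 1: the minimum value `H*` of the Ising Hamiltonian on the
Chimera graph satisfies `H* ≤ -(A_0 + A_1)`. -/
theorem stmt2 (r : ℕ) (hr : 1 ≤ r)
    (c0 : Fin (r - 1) → Fin r → Fin 4 → ℝ)
    (c1 : Fin r → Fin (r - 1) → Fin 4 → ℝ)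
    (c01 : Fin r → Fin r → Fin 4 → Fin 4 → ℝ)
    (d : ChimeraVertex r → ℝ)
    (Sopt : ChimeraVertex r → ℝ) (hSopt : IsPM Sopt)
    (hmin : ∀ S : ChimeraVertex r → ℝ, IsPM S →
      IsingH c0 c1 c01 d Sopt ≤ IsingH c0 c1 c01 d S) :
    IsingH c0 c1 c01 d Sopt ≤
      -((∑ i, ∑ j, ∑ k, |c0 i j k|) + (∑ i, ∑ j, ∑ k, |c1 i j k|)) :=
  stmt2_general r c0 c1 c01 d Sopt hmin
end

section
/- Lemma 2: Let C = ln(1+√2)/π. For any real numbers c_{ij} (1 ≤ i,j ≤ 4), min_S Σ_{1≤i,j≤4} c_{ij} S_{u_i} S_{v_j} ≤ −C · Σ_{1≤i,j≤4} |c_{ij}|, where the minimum is over all assignments S_{u_1},…,S_{u_4}, S_{v_1},…,S_{v_4} ∈ {−1,1}. (Equivalently: the minimum of the bilinear quadratic form over ±1 assignments on the complete bipartite graph K_{4,4} with edge coefficients c_{ij} is at most −C times the sum of the absolute values of the coefficients.) -/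
open Finset

lemma maxkey (x y : ℝ) : 2 * max |x| |y| ≤ |x + y| + |x - y| := by
  have h1 : |2*x| ≤ |x+y| + |x-y| := by
    have := abs_add_le (x+y) (x-y)
    simpa [show (x+y)+(x-y) = 2*x by ring] using this
  have h2 : |2*y| ≤ |x+y| + |x-y| := by
    have := abs_add_le (x+y) (y-x)
    rw [abs_sub_comm y x] at this
    simpa [show (x+y)+(y-x) = 2*y by ring] using this
  have e1 : |2*x| = 2*|x| := by rw [abs_mul]; norm_num
  have e2 : |2*y| = 2*|y| := by rw [abs_mul]; norm_num
  rcases le_total |x| |y| with h | h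
  · rw [max_eq_right h]; linarith
  · rw [max_eq_left h]; linarith

lemma pairmax (a b : ℝ) : |a| + |b| ≤ max |a + b| |a - b| := by
  rcases abs_cases a with ⟨ha, _⟩ | ⟨ha, _⟩ <;> rcases abs_cases b with ⟨hb, _⟩ | ⟨hb, _⟩ <;>
    [skip; skip; skip; skip] <;>
    linarith [le_abs_self (a+b), neg_abs_le (a+b), le_abs_self (a-b), neg_abs_le (a-b),
      le_max_left |a+b| |a-b|, le_max_right |a+b| |a-b|]

lemma foursum (U1 U2 V1 V2 : ℝ) (h1 : 0 ≤ U1) (h2 : 0 ≤ U2) (h3 : 0 ≤ V1) (h4 : 0 ≤ V2) :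
    (3/2) * (max U1 U2 + max V1 V2) ≤ max U1 V1 + max U1 V2 + max U2 V1 + max U2 V2 := by
  rcases le_total U1 U2 with hu | hu <;> rcases le_total V1 V2 with hv | hv
  · rw [max_eq_right hu, max_eq_right hv]
    linarith [le_max_left U1 V1, le_max_right U1 V1, le_max_left U1 V2, le_max_right U1 V2,
      le_max_left U2 V1, le_max_right U2 V1, le_max_left U2 V2, le_max_right U2 V2]
  · rw [max_eq_right hu, max_eq_left hv]
    linarith [le_max_left U1 V1, le_max_right U1 V1, le_max_left U1 V2, le_max_right U1 V2,
      le_max_left U2 V1, le_max_right U2 V1, le_max_left U2 V2, le_max_right U2 V2]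
  · rw [max_eq_left hu, max_eq_right hv]
    linarith [le_max_left U1 V1, le_max_right U1 V1, le_max_left U1 V2, le_max_right U1 V2,
      le_max_left U2 V1, le_max_right U2 V1, le_max_left U2 V2, le_max_right U2 V2]
  · rw [max_eq_left hu, max_eq_left hv]
    linarith [le_max_left U1 V1, le_max_right U1 V1, le_max_left U1 V2, le_max_right U1 V2,
      le_max_left U2 V1, le_max_right U2 V1, le_max_left U2 V2, le_max_right U2 V2]

lemma col (a1 a2 a3 a4 : ℝ) :
    3 * (|a1| + |a2| + |a3| + |a4|) ≤
      |(a1+a2)+(a3+a4)| + |(a1+a2)-(a3+a4)| + |(a1+a2)+(a3-a4)| + |(a1+a2)-(a3-a4)|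
      + |(a1-a2)+(a3+a4)| + |(a1-a2)-(a3+a4)| + |(a1-a2)+(a3-a4)| + |(a1-a2)-(a3-a4)| := by
  linarith [maxkey (a1+a2) (a3+a4), maxkey (a1+a2) (a3-a4), maxkey (a1-a2) (a3+a4),
    maxkey (a1-a2) (a3-a4), pairmax a1 a2, pairmax a3 a4,
    foursum |a1+a2| |a1-a2| |a3+a4| |a3-a4| (abs_nonneg _) (abs_nonneg _) (abs_nonneg _) (abs_nonneg _)]

lemma constC : Real.log (1 + Real.sqrt 2) / Real.pi ≤ 3/8 := by
  have hs2 : Real.sqrt 2 ≤ 1.5 := by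
    nlinarith [Real.sq_sqrt (by norm_num : (0:ℝ) ≤ 2), Real.sqrt_nonneg 2]
  have hlog : Real.log (1 + Real.sqrt 2) ≤ 1 := by
    rw [Real.log_le_iff_le_exp (by positivity)]
    have := Real.exp_one_gt_d9
    linarith
  have hpi := Real.pi_gt_three
  rw [div_le_iff₀ Real.pi_pos]
  nlinarith [Real.log_nonneg (by nlinarith [Real.sqrt_nonneg 2] : (1:ℝ) ≤ 1 + Real.sqrt 2)]

lemma helper (c : Fin 4 → Fin 4 → ℝ) (s : Fin 4 → ℝ) (hs : ∀ i, s i = 1 ∨ s i = -1)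
    (hbig : (3/8) * (∑ i, ∑ j, |c i j|) ≤ ∑ j, |∑ i, c i j * s i|) :
    ∃ s' t : Fin 4 → ℝ,
      (∀ i, s' i = 1 ∨ s' i = -1) ∧ (∀ j, t j = 1 ∨ t j = -1) ∧
      ∑ i, ∑ j, c i j * (s' i * t j) ≤
        -(Real.log (1 + Real.sqrt 2) / Real.pi) * ∑ i, ∑ j, |c i j| := by
  refine ⟨s, fun j => if 0 ≤ ∑ i, c i j * s i then -1 else 1, hs, ?_, ?_⟩
  · intro j; dsimp only; split
    · right; rfl
    · left; rfl
  · have hval : ∑ i, ∑ j, c i j * (s i * (if 0 ≤ ∑ i, c i j * s i then (-1:ℝ) else 1))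
        = -∑ j, |∑ i, c i j * s i| := by
      rw [Finset.sum_comm, ← Finset.sum_neg_distrib]
      apply Finset.sum_congr rfl
      intro j _
      have : ∑ i, c i j * (s i * (if 0 ≤ ∑ i, c i j * s i then (-1:ℝ) else 1))
          = (∑ i, c i j * s i) * (if 0 ≤ ∑ i, c i j * s i then (-1:ℝ) else 1) := by
        rw [Finset.sum_mul]
        exact Finset.sum_congr rfl fun i _ => by ring
      rw [this]
      split
      · next h => rw [abs_of_nonneg h]; ring
      · next h => rw [abs_of_neg (lt_of_not_ge h)]; ring
    rw [hval]
    have hT0 : 0 ≤ ∑ i, ∑ j, |c i j| :=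
      Finset.sum_nonneg fun i _ => Finset.sum_nonneg fun j _ => abs_nonneg _
    have := mul_le_mul_of_nonneg_right constC hT0
    linarith

/-- Lemma 2: with `C = ln(1+√2)/π`, the minimum over `±1` assignments of
the bilinear form on `K_{4,4}` with coefficients `c i j` is at most `-C ∑ |c i j|`. -/
theorem stmt5 (c : Fin 4 → Fin 4 → ℝ) :
    ∃ s t : Fin 4 → ℝ,
      (∀ i, s i = 1 ∨ s i = -1) ∧ (∀ j, t j = 1 ∨ t j = -1) ∧
      ∑ i, ∑ j, c i j * (s i * t j) ≤
        -(Real.log (1 + Real.sqrt 2) / Real.pi) * ∑ i, ∑ j, |c i j| := by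
  set G : (Fin 4 → ℝ) → ℝ := fun s => ∑ j, |∑ i, c i j * s i| with hG
  set T : ℝ := ∑ i, ∑ j, |c i j| with hT
  have hsum8 : 3 * T ≤ G ![1,1,1,1] + G ![1,1,1,-1] + G ![1,1,-1,1] + G ![1,1,-1,-1]
      + G ![1,-1,1,1] + G ![1,-1,1,-1] + G ![1,-1,-1,1] + G ![1,-1,-1,-1] := by
    have hTc : T = ∑ j, ∑ i, |c i j| := Finset.sum_comm
    rw [hTc, Finset.mul_sum, hG]
    simp only [← Finset.sum_add_distrib]
    apply Finset.sum_le_sum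
    intro j _
    simp only [Fin.sum_univ_four, Matrix.cons_val_zero, Matrix.cons_val_one, Matrix.head_cons,
      Matrix.cons_val_two, Matrix.tail_cons, Matrix.cons_val_three, mul_one, mul_neg_one]
    have e1 : |c 0 j + c 1 j + c 2 j + c 3 j| = |(c 0 j + c 1 j)+(c 2 j + c 3 j)| := by
      congr 1; ring
    have e2 : |c 0 j + c 1 j + c 2 j + -c 3 j| = |(c 0 j + c 1 j)+(c 2 j - c 3 j)| := by
      congr 1; ring
    have e3 : |c 0 j + c 1 j + -c 2 j + c 3 j| = |(c 0 j + c 1 j)-(c 2 j - c 3 j)| := by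
      congr 1; ring
    have e4 : |c 0 j + c 1 j + -c 2 j + -c 3 j| = |(c 0 j + c 1 j)-(c 2 j + c 3 j)| := by
      congr 1; ring
    have e5 : |c 0 j + -c 1 j + c 2 j + c 3 j| = |(c 0 j - c 1 j)+(c 2 j + c 3 j)| := by
      congr 1; ring
    have e6 : |c 0 j + -c 1 j + c 2 j + -c 3 j| = |(c 0 j - c 1 j)+(c 2 j - c 3 j)| := by
      congr 1; ring
    have e7 : |c 0 j + -c 1 j + -c 2 j + c 3 j| = |(c 0 j - c 1 j)-(c 2 j - c 3 j)| := by
      congr 1; ring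
    have e8 : |c 0 j + -c 1 j + -c 2 j + -c 3 j| = |(c 0 j - c 1 j)-(c 2 j + c 3 j)| := by
      congr 1; ring
    rw [e1, e2, e3, e4, e5, e6, e7, e8]
    linarith [col (c 0 j) (c 1 j) (c 2 j) (c 3 j)]
  have hor : (3/8) * T ≤ G ![1,1,1,1] ∨ (3/8) * T ≤ G ![1,1,1,-1] ∨ (3/8) * T ≤ G ![1,1,-1,1]
      ∨ (3/8) * T ≤ G ![1,1,-1,-1] ∨ (3/8) * T ≤ G ![1,-1,1,1] ∨ (3/8) * T ≤ G ![1,-1,1,-1]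
      ∨ (3/8) * T ≤ G ![1,-1,-1,1] ∨ (3/8) * T ≤ G ![1,-1,-1,-1] := by
    by_contra h
    push_neg at h
    obtain ⟨h1, h2, h3, h4, h5, h6, h7, h8⟩ := h
    linarith
  have hpm : ∀ e2 e3 e4 : ℝ, e2 = 1 ∨ e2 = -1 → e3 = 1 ∨ e3 = -1 → e4 = 1 ∨ e4 = -1 →
      ∀ i, (![1, e2, e3, e4] : Fin 4 → ℝ) i = 1 ∨ (![1, e2, e3, e4] : Fin 4 → ℝ) i = -1 := by
    intro e2 e3 e4 h2 h3 h4 i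
    fin_cases i <;> simp [h2, h3, h4]
  rcases hor with h | h | h | h | h | h | h | h <;>
    exact helper c _ (hpm _ _ _ (by norm_num) (by norm_num) (by norm_num)) h
end

section
/- Let C = ln(1+√2)/π. The minimum value H* of the Ising Hamiltonian H(S) on the Chimera graph G_r satisfies ((C+2)/C)·H* ≤ −(A_0 + A_1 + A_01), where A_0 = Σ_{(u,v)∈E_0}|c_{uv}|, A_1 = Σ_{(u,v)∈E_1}|c_{uv}|, and A_01 = Σ_{(u,v)∈E_01}|c_{uv}|. -/
open Finset

/-!
Averaging over random gauges. Since `H(S) + H(-S)` is twice the coupling part of `H(S)`, the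
minimum `H*` is at most the coupling energy of every `±1` assignment, hence at most its average
over any family of assignments. For `S v = g v * τ (π v)` with independent uniform signs `τ b`,
the correlation of `S u` and `S v` averages to `g u * g v` when `π u = π v` and to `0` otherwise,
so only the edges inside the blocks `π⁻¹ b` contribute. Taking as blocks the horizontal paths,
the vertical paths, or one of the four perfect matchings `k ↦ k + m` of every `K₄,₄` cell, with
`g` anti-aligned to the couplings on the blocks, gives `H* ≤ -A₀`, `H* ≤ -A₁` and
`4 H* ≤ -A₀₁`. Hence `6 H* ≤ -(A₀ + A₁ + A₀₁)`, and `(C + 2) / C ≥ 6` since `C ≤ 1/3` and `H* ≤ 0`.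
-/

theorem sum_units_mul_units {N : Type*} [Fintype N] [DecidableEq N] (a b : N) :
    ∑ τ : N → ℤˣ, ((τ a : ℤ) : ℝ) * (τ b : ℤ) =
      if a = b then (Fintype.card (N → ℤˣ) : ℝ) else 0 := by
  split_ifs with hab
  · subst hab
    simp [← Int.cast_mul, ← Units.val_mul, Int.units_mul_self]
  · -- flipping the sign at `a` negates every term
    have h := Equiv.sum_comp (Equiv.mulRight (Pi.mulSingle a (-1)))
      (fun τ : N → ℤˣ => ((τ a : ℤ) : ℝ) * (τ b : ℤ))
    simp only [Equiv.coe_mulRight, Pi.mul_apply, Pi.mulSingle_eq_same, Pi.mulSingle_eq_of_ne' hab,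
      mul_neg, mul_one, Units.val_neg, Int.cast_neg, neg_mul, sum_neg_distrib] at h
    linarith

noncomputable def antiSign (x : ℝ) : ℝ := if 0 ≤ x then -1 else 1

theorem mul_antiSign (x : ℝ) : x * antiSign x = -|x| := by
  unfold antiSign
  split_ifs with hx
  · rw [abs_of_nonneg hx, mul_neg_one]
  · rw [abs_of_neg (not_le.mp hx), mul_one, neg_neg]

theorem antiSign_mul_self (x : ℝ) : antiSign x * antiSign x = 1 := by
  unfold antiSign; split_ifs <;> norm_num

-- Signs on the path `0 — 1 — ⋯ — n` making each edge `(i, i + 1)` anti-aligned with `f i`.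
noncomputable def pathSign {n : ℕ} (f : Fin n → ℝ) (m : ℕ) : ℝ :=
  ∏ i ∈ range m, if h : i < n then antiSign (f ⟨i, h⟩) else 1

theorem pathSign_mul_self {n : ℕ} (f : Fin n → ℝ) (m : ℕ) : pathSign f m * pathSign f m = 1 := by
  rw [pathSign, ← prod_mul_distrib]
  refine prod_eq_one fun i _ => ?_
  split_ifs
  · exact antiSign_mul_self _
  · exact mul_one 1

theorem mul_pathSign_mul_pathSign_succ {n : ℕ} (f : Fin n → ℝ) (i : Fin n) :
    f i * (pathSign f i * pathSign f (i + 1)) = -|f i| := by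
  have hsucc : pathSign f (i + 1) = pathSign f i * antiSign (f i) := by
    rw [pathSign, prod_range_succ, dif_pos i.isLt, ← pathSign]
  rw [hsucc, ← mul_antiSign]
  linear_combination (f i * antiSign (f i)) * pathSign_mul_self f i

theorem sum_sum_add_shift_comm {G : Type*} [AddGroup G] [Fintype G] {M : Type*}
    [AddCommMonoid M] (f : G → G → M) : ∑ m, ∑ k, f k (k + m) = ∑ k0, ∑ k1, f k0 k1 := by
  rw [sum_comm]
  exact sum_congr rfl fun k _ => Equiv.sum_comp (Equiv.addLeft k) (f k)

section Chimera

@[simp] theorem val_lowRow {r : ℕ} (i : Fin (r - 1)) : (lowRow i : ℕ) = i := rfl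

@[simp] theorem val_highRow {r : ℕ} (i : Fin (r - 1)) : (highRow i : ℕ) = i + 1 := rfl

@[simp] theorem lowRow_ne_highRow {r : ℕ} (i : Fin (r - 1)) : lowRow i ≠ highRow i :=
  Fin.ne_of_val_ne (by simp)

variable {r : ℕ} (c0 : Fin (r - 1) → Fin r → Fin 4 → ℝ) (c1 : Fin r → Fin (r - 1) → Fin 4 → ℝ)
  (c01 : Fin r → Fin r → Fin 4 → Fin 4 → ℝ)

def couplingForm : (ChimeraVertex r → ChimeraVertex r → ℝ) →ₗ[ℝ] ℝ where
  toFun P := (∑ i, ∑ j, ∑ k, c0 i j k * P (lowRow i, j, k, 0) (highRow i, j, k, 0))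
    + (∑ i, ∑ j, ∑ k, c1 i j k * P (i, lowRow j, k, 1) (i, highRow j, k, 1))
    + (∑ i, ∑ j, ∑ k0, ∑ k1, c01 i j k0 k1 * P (i, j, k0, 0) (i, j, k1, 1))
  map_add' P Q := by simp only [Pi.add_apply, mul_add, sum_add_distrib]; ring
  map_smul' a P := by
    simp only [Pi.smul_apply, smul_eq_mul, RingHom.id_apply, mul_add, mul_sum, mul_left_comm a]

theorem isingH_eq_couplingForm_add (d S : ChimeraVertex r → ℝ) :
    IsingH c0 c1 c01 d S = couplingForm c0 c1 c01 (fun u v => S u * S v) + ∑ v, d v * S v := rfl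

theorem IsPM.neg {S : ChimeraVertex r → ℝ} (hS : IsPM S) : IsPM (-S) := fun v => by
  rcases hS v with h | h <;> simp [h]

theorem IsPM.mul_units {g : ChimeraVertex r → ℝ} (hg : IsPM g) {N : Type*}
    (π : ChimeraVertex r → N) (τ : N → ℤˣ) : IsPM (fun v => g v * (τ (π v) : ℤ)) := fun v => by
  rcases hg v with h | h <;> rcases Int.units_eq_one_or (τ (π v)) with h' | h' <;> simp [h, h']

variable {c0 c1 c01} {d Sopt : ChimeraVertex r → ℝ}
  (hmin : ∀ S, IsPM S → IsingH c0 c1 c01 d Sopt ≤ IsingH c0 c1 c01 d S)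
include hmin

theorem isingH_le_couplingForm {S : ChimeraVertex r → ℝ} (hS : IsPM S) :
    IsingH c0 c1 c01 d Sopt ≤ couplingForm c0 c1 c01 (fun u v => S u * S v) := by
  have hpos := hmin S hS
  have hneg := hmin (-S) hS.neg
  rw [isingH_eq_couplingForm_add c0 c1 c01 d S] at hpos
  rw [isingH_eq_couplingForm_add c0 c1 c01 d (-S)] at hneg
  simp only [Pi.neg_apply, neg_mul, mul_neg, neg_neg, sum_neg_distrib] at hneg
  linarith

theorem isingH_le_couplingForm_ite {N : Type*} [Fintype N] [DecidableEq N]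
    (π : ChimeraVertex r → N) {g : ChimeraVertex r → ℝ} (hg : IsPM g) :
    IsingH c0 c1 c01 d Sopt ≤
      couplingForm c0 c1 c01 (fun u v => if π u = π v then g u * g v else 0) := by
  set S : (N → ℤˣ) → ChimeraVertex r → ℝ := fun τ v => g v * (τ (π v) : ℤ)
  have hcorr : ∑ τ, (fun u v => S τ u * S τ v) =
      (Fintype.card (N → ℤˣ) : ℝ) • fun u v => if π u = π v then g u * g v else 0 := by
    ext u v
    simp only [S, Finset.sum_apply, Pi.smul_apply, smul_eq_mul, mul_mul_mul_comm, ← mul_sum,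
      sum_units_mul_units]
    split_ifs <;> ring
  have hsum := sum_le_sum fun τ (_ : τ ∈ univ) =>
    isingH_le_couplingForm hmin (hg.mul_units π τ)
  rw [← map_sum, hcorr, map_smul, sum_const, card_univ, nsmul_eq_mul, smul_eq_mul] at hsum
  exact le_of_mul_le_mul_left hsum (by positivity)

theorem isingH_le_neg_sum_abs_c0 : IsingH c0 c1 c01 d Sopt ≤ -∑ i, ∑ j, ∑ k, |c0 i j k| := by
  let π : ChimeraVertex r → (Fin r × Fin 4) ⊕ ChimeraVertex r := fun (i, j, k, l) =>
    if l = 0 then .inl (j, k) else .inr (i, j, k, l)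
  let g : ChimeraVertex r → ℝ := fun (i, j, k, l) =>
    if l = 0 then pathSign (fun i' => c0 i' j k) i else 1
  have hg : IsPM g := fun (i, j, k, l) => by
    simp only [g]
    split_ifs
    · exact mul_self_eq_one_iff.mp (pathSign_mul_self _ _)
    · exact .inl rfl
  convert isingH_le_couplingForm_ite hmin π hg using 1
  simp only [couplingForm, π, g, LinearMap.coe_mk, AddHom.coe_mk, Fin.isValue, ↓reduceIte,
    one_ne_zero, reduceCtorEq, Sum.inr.injEq, Prod.mk.injEq, lowRow_ne_highRow, and_true,
    and_false, mul_zero, sum_const_zero, add_zero, val_lowRow, val_highRow,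
    ← sum_neg_distrib]
  exact sum_congr rfl fun i _ => sum_congr rfl fun j _ => sum_congr rfl fun k _ =>
    (mul_pathSign_mul_pathSign_succ (fun i' => c0 i' j k) i).symm

theorem isingH_le_neg_sum_abs_c1 : IsingH c0 c1 c01 d Sopt ≤ -∑ i, ∑ j, ∑ k, |c1 i j k| := by
  let π : ChimeraVertex r → (Fin r × Fin 4) ⊕ ChimeraVertex r := fun (i, j, k, l) =>
    if l = 0 then .inr (i, j, k, l) else .inl (i, k)
  let g : ChimeraVertex r → ℝ := fun (i, j, k, l) =>
    if l = 0 then 1 else pathSign (fun j' => c1 i j' k) j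
  have hg : IsPM g := fun (i, j, k, l) => by
    simp only [g]
    split_ifs
    · exact .inl rfl
    · exact mul_self_eq_one_iff.mp (pathSign_mul_self _ _)
  convert isingH_le_couplingForm_ite hmin π hg using 1
  simp only [couplingForm, π, g, LinearMap.coe_mk, AddHom.coe_mk, Fin.isValue, ↓reduceIte,
    one_ne_zero, reduceCtorEq, Sum.inr.injEq, Prod.mk.injEq, lowRow_ne_highRow, and_true,
    mul_zero, sum_const_zero, zero_add, add_zero, val_lowRow, val_highRow,
    ← sum_neg_distrib]
  exact sum_congr rfl fun i _ => sum_congr rfl fun j _ => sum_congr rfl fun k _ =>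
    (mul_pathSign_mul_pathSign_succ (fun j' => c1 i j' k) j).symm

theorem isingH_le_neg_sum_abs_c01_shift (m : Fin 4) :
    IsingH c0 c1 c01 d Sopt ≤ -∑ i, ∑ j, ∑ k, |c01 i j k (k + m)| := by
  -- the blocks are the edges `(k, k + m)` of the cells
  let π : ChimeraVertex r → Fin r × Fin r × Fin 4 := fun (i, j, k, l) =>
    (i, j, if l = 0 then k + m else k)
  let g : ChimeraVertex r → ℝ := fun (i, j, k, l) =>
    if l = 0 then antiSign (c01 i j k (k + m)) else 1
  have hg : IsPM g := fun (i, j, k, l) => by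
    simp only [g]
    split_ifs
    · exact mul_self_eq_one_iff.mp (antiSign_mul_self _)
    · exact .inl rfl
  convert isingH_le_couplingForm_ite hmin π hg using 1
  simp [couplingForm, π, g, mul_antiSign]

theorem four_mul_isingH_le_neg_sum_abs_c01 :
    4 * IsingH c0 c1 c01 d Sopt ≤ -∑ i, ∑ j, ∑ k0, ∑ k1, |c01 i j k0 k1| :=
  calc 4 * IsingH c0 c1 c01 d Sopt = ∑ _m : Fin 4, IsingH c0 c1 c01 d Sopt := by simp
    _ ≤ ∑ m : Fin 4, -∑ i, ∑ j, ∑ k, |c01 i j k (k + m)| :=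
      sum_le_sum fun m _ => isingH_le_neg_sum_abs_c01_shift hmin m
    _ = -∑ i, ∑ j, ∑ k0, ∑ k1, |c01 i j k0 k1| := by
      rw [sum_neg_distrib, sum_comm]
      refine congrArg _ (sum_congr rfl fun i _ => ?_)
      rw [sum_comm]
      exact sum_congr rfl fun j _ => sum_sum_add_shift_comm fun k0 k1 => |c01 i j k0 k1|

end Chimera

theorem log_one_add_sqrt_two_pos : 0 < Real.log (1 + √2) :=
  Real.log_pos (by linarith [Real.sqrt_pos.mpr two_pos])

theorem log_one_add_sqrt_two_div_pi_le : Real.log (1 + √2) / Real.pi ≤ 1 / 3 := by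
  have hsqrt : √2 < 3 / 2 := by rw [Real.sqrt_lt' (by norm_num)]; norm_num
  have hlog : Real.log (1 + √2) ≤ 1 := by
    rw [Real.log_le_iff_le_exp (by positivity)]
    linarith [Real.exp_one_gt_d9]
  rw [div_le_iff₀ Real.pi_pos]
  linarith [Real.pi_gt_three]

theorem stmt7_general (r : ℕ)
    (c0 : Fin (r - 1) → Fin r → Fin 4 → ℝ)
    (c1 : Fin r → Fin (r - 1) → Fin 4 → ℝ)
    (c01 : Fin r → Fin r → Fin 4 → Fin 4 → ℝ)
    (d : ChimeraVertex r → ℝ)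
    (Sopt : ChimeraVertex r → ℝ)
    (hmin : ∀ S : ChimeraVertex r → ℝ, IsPM S →
      IsingH c0 c1 c01 d Sopt ≤ IsingH c0 c1 c01 d S) :
    ((Real.log (1 + Real.sqrt 2) / Real.pi + 2) / (Real.log (1 + Real.sqrt 2) / Real.pi)) *
        IsingH c0 c1 c01 d Sopt ≤
      -((∑ i, ∑ j, ∑ k, |c0 i j k|) + (∑ i, ∑ j, ∑ k, |c1 i j k|)
          + (∑ i, ∑ j, ∑ k0, ∑ k1, |c01 i j k0 k1|)) := by
  set C := Real.log (1 + Real.sqrt 2) / Real.pi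
  have hC : 0 < C := div_pos log_one_add_sqrt_two_pos Real.pi_pos
  have hcoef : 6 ≤ (C + 2) / C := by
    rw [le_div_iff₀ hC]
    linarith [log_one_add_sqrt_two_div_pi_le]
  have h0 := isingH_le_neg_sum_abs_c0 hmin
  have h1 := isingH_le_neg_sum_abs_c1 hmin
  have h01 := four_mul_isingH_le_neg_sum_abs_c01 hmin
  have hnonpos : IsingH c0 c1 c01 d Sopt ≤ 0 := h0.trans (by simp only [neg_nonpos]; positivity)
  linarith [mul_le_mul_of_nonpos_right hcoef hnonpos]

/-- with `C = ln(1+√2)/π`, the minimum value `H*` of the Ising Hamiltonian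
on the Chimera graph satisfies `((C+2)/C)·H* ≤ -(A_0 + A_1 + A_01)`. -/
theorem stmt7 (r : ℕ) (hr : 1 ≤ r)
    (c0 : Fin (r - 1) → Fin r → Fin 4 → ℝ)
    (c1 : Fin r → Fin (r - 1) → Fin 4 → ℝ)
    (c01 : Fin r → Fin r → Fin 4 → Fin 4 → ℝ)
    (d : ChimeraVertex r → ℝ)
    (Sopt : ChimeraVertex r → ℝ) (hSopt : IsPM Sopt)
    (hmin : ∀ S : ChimeraVertex r → ℝ, IsPM S →
      IsingH c0 c1 c01 d Sopt ≤ IsingH c0 c1 c01 d S) :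
    ((Real.log (1 + Real.sqrt 2) / Real.pi + 2) / (Real.log (1 + Real.sqrt 2) / Real.pi)) *
        IsingH c0 c1 c01 d Sopt ≤
      -((∑ i, ∑ j, ∑ k, |c0 i j k|) + (∑ i, ∑ j, ∑ k, |c1 i j k|)
          + (∑ i, ∑ j, ∑ k0, ∑ k1, |c01 i j k0 k1|)) :=
  stmt7_general r c0 c1 c01 d Sopt hmin
end

section
/- Suppose A_0 ≤ A_1, let T ≥ 2 be an integer, and let k ∈ {0,…,T−1} satisfy A^k_0 ≤ (2/T)·A_0. If S' minimizes H_{sub,k} over all assignments, then H_{sub,k}(S') ≤ (1 − 1/T)·H*, where H* is the minimum of H. -/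
open Finset

/-- An edge of `E_0`, indexed by `(i, j, k)` and joining (1-based) rows `i.val + 1` and
`i.val + 2`, belongs to `E^kk_0` iff one of its endpoints lies in a row `≡ kk (mod T)`. -/
def InEk0 {r : ℕ} (T kk : ℕ) (i : Fin (r - 1)) : Prop :=
  (i.val + 1) % T = kk ∨ (i.val + 2) % T = kk

instance {r : ℕ} (T kk : ℕ) (i : Fin (r - 1)) : Decidable (InEk0 (r := r) T kk i) := by
  unfold InEk0; infer_instance

/-- `A^kk_0`, the sum of `|c_uv|` over the edges of `E^kk_0`. -/
def Ak0 {r : ℕ} (c0 : Fin (r - 1) → Fin r → Fin 4 → ℝ) (T kk : ℕ) : ℝ :=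
  ∑ i, ∑ j, ∑ k, if InEk0 T kk i then |c0 i j k| else 0

/-- `H_kk(S)`, the part of the Hamiltonian supported on the edges of `E^kk_0`. -/
def Hk0 {r : ℕ} (c0 : Fin (r - 1) → Fin r → Fin 4 → ℝ) (T kk : ℕ)
    (S : ChimeraVertex r → ℝ) : ℝ :=
  ∑ i, ∑ j, ∑ k,
    if InEk0 T kk i then c0 i j k * (S (lowRow i, j, k, 0) * S (highRow i, j, k, 0)) else 0

/-- `H_{sub,kk}(S) = H(S) - H_kk(S)`. -/
def Hsub {r : ℕ} (c0 : Fin (r - 1) → Fin r → Fin 4 → ℝ)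
    (c1 : Fin r → Fin (r - 1) → Fin 4 → ℝ)
    (c01 : Fin r → Fin r → Fin 4 → Fin 4 → ℝ)
    (d : ChimeraVertex r → ℝ) (T kk : ℕ) (S : ChimeraVertex r → ℝ) : ℝ :=
  IsingH c0 c1 c01 d S - Hk0 c0 T kk S

noncomputable def pathSgn (f : ℕ → ℝ) : ℕ → ℝ
  | 0 => 1
  | n+1 => if 0 ≤ f n then -pathSgn f n else pathSgn f n

lemma pathSgn_pm (f : ℕ → ℝ) (n : ℕ) : pathSgn f n = 1 ∨ pathSgn f n = -1 := by
  induction n with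
  | zero => left; rfl
  | succ n ih =>
    simp only [pathSgn]
    rcases ih with h | h <;> rw [h] <;> split <;> simp

lemma pathSgn_sq (f : ℕ → ℝ) (n : ℕ) : pathSgn f n * pathSgn f n = 1 := by
  rcases pathSgn_pm f n with h | h <;> rw [h] <;> ring

lemma pathSgn_edge (f : ℕ → ℝ) (n : ℕ) :
    f n * (pathSgn f n * pathSgn f (n + 1)) = -|f n| := by
  have hp := pathSgn_sq f n
  simp only [pathSgn]
  split_ifs with h
  · rw [abs_of_nonneg h]; linear_combination (-(f n)) * hp
  · rw [abs_of_neg (lt_of_not_ge h)]; linear_combination (f n) * hp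

noncomputable def S0 {r : ℕ} (c0 : Fin (r - 1) → Fin r → Fin 4 → ℝ)
    (c1 : Fin r → Fin (r - 1) → Fin 4 → ℝ) : ChimeraVertex r → ℝ :=
  fun v => if v.2.2.2 = 0 then
    pathSgn (fun n => if h : n < r - 1 then c0 ⟨n, h⟩ v.2.1 v.2.2.1 else 0) v.1.val
  else
    pathSgn (fun n => if h : n < r - 1 then c1 v.1 ⟨n, h⟩ v.2.2.1 else 0) v.2.1.val

lemma S0_pm {r : ℕ} (c0 : Fin (r - 1) → Fin r → Fin 4 → ℝ)
    (c1 : Fin r → Fin (r - 1) → Fin 4 → ℝ) (v : ChimeraVertex r) :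
    S0 c0 c1 v = 1 ∨ S0 c0 c1 v = -1 := by
  unfold S0; split <;> apply pathSgn_pm

lemma S0_e0edge {r : ℕ} (c0 : Fin (r - 1) → Fin r → Fin 4 → ℝ)
    (c1 : Fin r → Fin (r - 1) → Fin 4 → ℝ) (i : Fin (r-1)) (j : Fin r) (k : Fin 4) :
    c0 i j k * (S0 c0 c1 (lowRow i, j, k, 0) * S0 c0 c1 (highRow i, j, k, 0)) = -|c0 i j k| := by
  have h := pathSgn_edge (fun n => if h : n < r - 1 then c0 ⟨n, h⟩ j k else 0) i.val
  simp only [i.isLt, dif_pos, Fin.eta] at h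
  exact h

lemma S0_e1edge {r : ℕ} (c0 : Fin (r - 1) → Fin r → Fin 4 → ℝ)
    (c1 : Fin r → Fin (r - 1) → Fin 4 → ℝ) (i : Fin r) (j : Fin (r-1)) (k : Fin 4) :
    c1 i j k * (S0 c0 c1 (i, lowRow j, k, 1) * S0 c0 c1 (i, highRow j, k, 1)) = -|c1 i j k| := by
  have h := pathSgn_edge (fun n => if h : n < r - 1 then c1 i ⟨n, h⟩ k else 0) j.val
  simp only [j.isLt, dif_pos, Fin.eta] at h
  exact h

noncomputable def Sflip {r : ℕ} (c0 : Fin (r - 1) → Fin r → Fin 4 → ℝ)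
    (c1 : Fin r → Fin (r - 1) → Fin 4 → ℝ) (e0 e1 : ℝ) : ChimeraVertex r → ℝ :=
  fun v => (if v.2.2.2 = 0 then e0 else e1) * S0 c0 c1 v

lemma Sflip_pm {r : ℕ} (c0 : Fin (r - 1) → Fin r → Fin 4 → ℝ)
    (c1 : Fin r → Fin (r - 1) → Fin 4 → ℝ) {e0 e1 : ℝ}
    (h0 : e0 = 1 ∨ e0 = -1) (h1 : e1 = 1 ∨ e1 = -1) : IsPM (Sflip c0 c1 e0 e1) := by
  intro v
  unfold Sflip
  rcases S0_pm c0 c1 v with h | h <;> rw [h] <;> split <;>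
    first
    | (rcases h0 with h0 | h0 <;> rw [h0] <;> simp)
    | (rcases h1 with h1 | h1 <;> rw [h1] <;> simp)

lemma H_flip {r : ℕ} (c0 : Fin (r - 1) → Fin r → Fin 4 → ℝ)
    (c1 : Fin r → Fin (r - 1) → Fin 4 → ℝ)
    (c01 : Fin r → Fin r → Fin 4 → Fin 4 → ℝ)
    (d : ChimeraVertex r → ℝ) {e0 e1 : ℝ}
    (he0 : e0 * e0 = 1) (he1 : e1 * e1 = 1) :
    IsingH c0 c1 c01 d (Sflip c0 c1 e0 e1)
      = -(∑ i, ∑ j, ∑ k, |c0 i j k|) - (∑ i, ∑ j, ∑ k, |c1 i j k|)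
        + e0 * e1 * (∑ i, ∑ j, ∑ k0, ∑ k1,
            c01 i j k0 k1 * (S0 c0 c1 (i, j, k0, 0) * S0 c0 c1 (i, j, k1, 1)))
        + e0 * (∑ v : ChimeraVertex r, if v.2.2.2 = 0 then d v * S0 c0 c1 v else 0)
        + e1 * (∑ v : ChimeraVertex r, if v.2.2.2 = 0 then 0 else d v * S0 c0 c1 v) := by
  unfold IsingH
  have hT1 : (∑ i, ∑ j, ∑ k, c0 i j k *
        (Sflip c0 c1 e0 e1 (lowRow i, j, k, 0) * Sflip c0 c1 e0 e1 (highRow i, j, k, 0)))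
      = ∑ i, ∑ j, ∑ k, -|c0 i j k| := by
    refine Finset.sum_congr rfl fun i _ => Finset.sum_congr rfl fun j _ =>
      Finset.sum_congr rfl fun k _ => ?_
    have ha : Sflip c0 c1 e0 e1 (lowRow i, j, k, 0) = e0 * S0 c0 c1 (lowRow i, j, k, 0) := rfl
    have hb : Sflip c0 c1 e0 e1 (highRow i, j, k, 0) = e0 * S0 c0 c1 (highRow i, j, k, 0) := rfl
    rw [ha, hb]
    linear_combination (e0 * e0) * (S0_e0edge c0 c1 i j k) - |c0 i j k| * he0
  have hT2 : (∑ i, ∑ j, ∑ k, c1 i j k *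
        (Sflip c0 c1 e0 e1 (i, lowRow j, k, 1) * Sflip c0 c1 e0 e1 (i, highRow j, k, 1)))
      = ∑ i, ∑ j, ∑ k, -|c1 i j k| := by
    refine Finset.sum_congr rfl fun i _ => Finset.sum_congr rfl fun j _ =>
      Finset.sum_congr rfl fun k _ => ?_
    have ha : Sflip c0 c1 e0 e1 (i, lowRow j, k, 1) = e1 * S0 c0 c1 (i, lowRow j, k, 1) := rfl
    have hb : Sflip c0 c1 e0 e1 (i, highRow j, k, 1) = e1 * S0 c0 c1 (i, highRow j, k, 1) := rfl
    rw [ha, hb]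
    linear_combination (e1 * e1) * (S0_e1edge c0 c1 i j k) - |c1 i j k| * he1
  have hT3 : (∑ i, ∑ j, ∑ k0, ∑ k1, c01 i j k0 k1 *
        (Sflip c0 c1 e0 e1 (i, j, k0, 0) * Sflip c0 c1 e0 e1 (i, j, k1, 1)))
      = e0 * e1 * (∑ i, ∑ j, ∑ k0, ∑ k1,
            c01 i j k0 k1 * (S0 c0 c1 (i, j, k0, 0) * S0 c0 c1 (i, j, k1, 1))) := by
    simp only [Finset.mul_sum]
    refine Finset.sum_congr rfl fun i _ => Finset.sum_congr rfl fun j _ =>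
      Finset.sum_congr rfl fun k0 _ => Finset.sum_congr rfl fun k1 _ => ?_
    have ha : Sflip c0 c1 e0 e1 (i, j, k0, 0) = e0 * S0 c0 c1 (i, j, k0, 0) := rfl
    have hb : Sflip c0 c1 e0 e1 (i, j, k1, 1) = e1 * S0 c0 c1 (i, j, k1, 1) := rfl
    rw [ha, hb]; ring
  have hT4 : (∑ v, d v * Sflip c0 c1 e0 e1 v)
      = e0 * (∑ v : ChimeraVertex r, if v.2.2.2 = 0 then d v * S0 c0 c1 v else 0)
        + e1 * (∑ v : ChimeraVertex r, if v.2.2.2 = 0 then 0 else d v * S0 c0 c1 v) := by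
    rw [Finset.mul_sum, Finset.mul_sum, ← Finset.sum_add_distrib]
    refine Finset.sum_congr rfl fun v _ => ?_
    have ha : Sflip c0 c1 e0 e1 v = (if v.2.2.2 = 0 then e0 else e1) * S0 c0 c1 v := rfl
    rw [ha]
    split_ifs <;> ring
  rw [hT1, hT2, hT3, hT4]
  simp only [Finset.sum_neg_distrib]
  ring

lemma Hk0_lower {r : ℕ} (c0 : Fin (r - 1) → Fin r → Fin 4 → ℝ) (T kk : ℕ)
    (S : ChimeraVertex r → ℝ) (hS : IsPM S) :
    -(Ak0 c0 T kk) ≤ Hk0 c0 T kk S := by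
  unfold Hk0 Ak0
  simp only [← Finset.sum_neg_distrib]
  refine Finset.sum_le_sum fun i _ => Finset.sum_le_sum fun j _ =>
    Finset.sum_le_sum fun k _ => ?_
  split_ifs with h
  · rcases hS (lowRow i, j, k, 0) with h1 | h1 <;> rcases hS (highRow i, j, k, 0) with h2 | h2 <;>
      rw [h1, h2] <;>
      nlinarith [le_abs_self (c0 i j k), neg_abs_le (c0 i j k)]
  · norm_num

/-- if `A_0 ≤ A_1`, `T ≥ 2`, `kk < T` satisfies `A^kk_0 ≤ (2/T)·A_0`,
and `S'` minimizes `H_{sub,kk}`, then `H_{sub,kk}(S') ≤ (1 - 1/T)·H*`. -/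
theorem stmt13 (r : ℕ) (hr : 1 ≤ r)
    (c0 : Fin (r - 1) → Fin r → Fin 4 → ℝ)
    (c1 : Fin r → Fin (r - 1) → Fin 4 → ℝ)
    (c01 : Fin r → Fin r → Fin 4 → Fin 4 → ℝ)
    (d : ChimeraVertex r → ℝ)
    (hA : (∑ i, ∑ j, ∑ k, |c0 i j k|) ≤ (∑ i, ∑ j, ∑ k, |c1 i j k|))
    (T : ℕ) (hT : 2 ≤ T) (kk : ℕ) (hkk : kk < T)
    (hAk : Ak0 c0 T kk ≤ (2 / (T : ℝ)) * (∑ i, ∑ j, ∑ k, |c0 i j k|))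
    (S' : ChimeraVertex r → ℝ) (hS' : IsPM S')
    (hmin' : ∀ S : ChimeraVertex r → ℝ, IsPM S →
      Hsub c0 c1 c01 d T kk S' ≤ Hsub c0 c1 c01 d T kk S)
    (Sopt : ChimeraVertex r → ℝ) (hSopt : IsPM Sopt)
    (hmin : ∀ S : ChimeraVertex r → ℝ, IsPM S →
      IsingH c0 c1 c01 d Sopt ≤ IsingH c0 c1 c01 d S) :
    Hsub c0 c1 c01 d T kk S' ≤ (1 - 1 / (T : ℝ)) * IsingH c0 c1 c01 d Sopt := by
  set A0 := (∑ i, ∑ j, ∑ k, |c0 i j k|) with hA0def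
  set A1 := (∑ i, ∑ j, ∑ k, |c1 i j k|) with hA1def
  set Hstar := IsingH c0 c1 c01 d Sopt with hHstar
  -- Step 1 : Hstar ≤ -A0 - A1
  have key : Hstar ≤ -A0 - A1 := by
    have hpp := hmin _ (Sflip_pm c0 c1 (Or.inl rfl) (Or.inl rfl))
    have hpm := hmin _ (Sflip_pm c0 c1 (e0 := 1) (e1 := -1) (Or.inl rfl) (Or.inr rfl))
    have hmp := hmin _ (Sflip_pm c0 c1 (e0 := -1) (e1 := 1) (Or.inr rfl) (Or.inl rfl))
    have hmm := hmin _ (Sflip_pm c0 c1 (e0 := -1) (e1 := -1) (Or.inr rfl) (Or.inr rfl))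
    rw [H_flip c0 c1 c01 d (by norm_num) (by norm_num)] at hpp hpm hmp hmm
    linarith
  have hHle : Hstar ≤ -(2 * A0) := by linarith
  -- Step 2 : Hsub S' ≤ Hstar + Ak0
  have h1 : Hsub c0 c1 c01 d T kk S' ≤ Hsub c0 c1 c01 d T kk Sopt := hmin' Sopt hSopt
  have h2 : Hsub c0 c1 c01 d T kk Sopt = Hstar - Hk0 c0 T kk Sopt := rfl
  have h3 := Hk0_lower c0 T kk Sopt hSopt
  -- Step 3 : arithmetic
  have hTpos : (0 : ℝ) < T := by
    have : (2 : ℝ) ≤ T := by exact_mod_cast hT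
    linarith
  have h4 : (1 / (T : ℝ)) * Hstar ≤ (1 / (T : ℝ)) * (-(2 * A0)) :=
    mul_le_mul_of_nonneg_left hHle (by positivity)
  have e1 : (1 - 1 / (T : ℝ)) * Hstar = Hstar - (1 / (T : ℝ)) * Hstar := by ring
  have e2 : (2 / (T : ℝ)) * A0 = -((1 / (T : ℝ)) * (-(2 * A0))) := by ring
  linarith
end

section
/- Combinatorial core of Theorem 1: Suppose A_0 ≤ A_1 and let T ≥ 2 be an integer. Then there exists k ∈ {0,…,T−1} such that every assignment S' minimizing H_{sub,k} satisfies H* ≤ H(S') ≤ (1 − 2/T)·H*, where H* is the minimum of H; i.e., S' is a (1 − 2/T)-approximate minimizer of the Hamiltonian H. -/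
open Finset

namespace Stmt14Aux

noncomputable def g (c : ℝ) : ℝ := if 0 ≤ c then -1 else 1

lemma g_mul (c : ℝ) : c * g c = -|c| := by
  unfold g; split
  · rename_i h; rw [abs_of_nonneg h]; ring
  · rename_i h; rw [abs_of_neg (lt_of_not_ge h)]; ring

lemma g_pm (c : ℝ) : g c = 1 ∨ g c = -1 := by unfold g; split <;> simp

lemma mul_pm {a b : ℝ} (ha : a = 1 ∨ a = -1) (hb : b = 1 ∨ b = -1) :
    a * b = 1 ∨ a * b = -1 := by rcases ha with h | h <;> rcases hb with h' | h' <;> simp [h, h']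

lemma sq_of_pm {a : ℝ} (ha : a = 1 ∨ a = -1) : a * a = 1 := by
  rcases ha with h | h <;> simp [h]

noncomputable def f0 {r : ℕ} (c0 : Fin (r - 1) → Fin r → Fin 4 → ℝ) (j : Fin r) (k : Fin 4) :
    ℕ → ℝ
  | 0 => 1
  | n + 1 => (if h : n < r - 1 then g (c0 ⟨n, h⟩ j k) else 1) * f0 c0 j k n

noncomputable def f1 {r : ℕ} (c1 : Fin r → Fin (r - 1) → Fin 4 → ℝ) (i : Fin r) (k : Fin 4) :
    ℕ → ℝ
  | 0 => 1
  | n + 1 => (if h : n < r - 1 then g (c1 i ⟨n, h⟩ k) else 1) * f1 c1 i k n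

lemma f0_pm {r : ℕ} (c0 : Fin (r - 1) → Fin r → Fin 4 → ℝ) (j : Fin r) (k : Fin 4) (n : ℕ) :
    f0 c0 j k n = 1 ∨ f0 c0 j k n = -1 := by
  induction n with
  | zero => left; rfl
  | succ n ih =>
    show (if h : n < r - 1 then g (c0 ⟨n, h⟩ j k) else 1) * f0 c0 j k n = 1 ∨ _ = -1
    refine mul_pm ?_ ih
    split
    · exact g_pm _
    · left; rfl

lemma f1_pm {r : ℕ} (c1 : Fin r → Fin (r - 1) → Fin 4 → ℝ) (i : Fin r) (k : Fin 4) (n : ℕ) :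
    f1 c1 i k n = 1 ∨ f1 c1 i k n = -1 := by
  induction n with
  | zero => left; rfl
  | succ n ih =>
    show (if h : n < r - 1 then g (c1 i ⟨n, h⟩ k) else 1) * f1 c1 i k n = 1 ∨ _ = -1
    refine mul_pm ?_ ih
    split
    · exact g_pm _
    · left; rfl

lemma f0_step {r : ℕ} (c0 : Fin (r - 1) → Fin r → Fin 4 → ℝ) (j : Fin r) (k : Fin 4)
    (i : Fin (r - 1)) :
    f0 c0 j k i.val * f0 c0 j k (i.val + 1) = g (c0 i j k) := by
  have h1 : f0 c0 j k (i.val + 1)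
      = (if h : i.val < r - 1 then g (c0 ⟨i.val, h⟩ j k) else 1) * f0 c0 j k i.val := rfl
  rw [h1, dif_pos i.isLt, Fin.eta]
  have h2 := sq_of_pm (f0_pm c0 j k i.val)
  calc f0 c0 j k i.val * (g (c0 i j k) * f0 c0 j k i.val)
      = g (c0 i j k) * (f0 c0 j k i.val * f0 c0 j k i.val) := by ring
    _ = g (c0 i j k) := by rw [h2, mul_one]

lemma f1_step {r : ℕ} (c1 : Fin r → Fin (r - 1) → Fin 4 → ℝ) (i : Fin r) (k : Fin 4)
    (j : Fin (r - 1)) :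
    f1 c1 i k j.val * f1 c1 i k (j.val + 1) = g (c1 i j k) := by
  have h1 : f1 c1 i k (j.val + 1)
      = (if h : j.val < r - 1 then g (c1 i ⟨j.val, h⟩ k) else 1) * f1 c1 i k j.val := rfl
  rw [h1, dif_pos j.isLt, Fin.eta]
  have h2 := sq_of_pm (f1_pm c1 i k j.val)
  calc f1 c1 i k j.val * (g (c1 i j k) * f1 c1 i k j.val)
      = g (c1 i j k) * (f1 c1 i k j.val * f1 c1 i k j.val) := by ring
    _ = g (c1 i j k) := by rw [h2, mul_one]

noncomputable def Sab {r : ℕ} (c0 : Fin (r - 1) → Fin r → Fin 4 → ℝ)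
    (c1 : Fin r → Fin (r - 1) → Fin 4 → ℝ) (α β : ℝ) : ChimeraVertex r → ℝ :=
  fun v => if v.2.2.2 = 0 then α * f0 c0 v.2.1 v.2.2.1 v.1.val else β * f1 c1 v.1 v.2.2.1 v.2.1.val

lemma Sab_apply0 {r : ℕ} (c0 : Fin (r - 1) → Fin r → Fin 4 → ℝ)
    (c1 : Fin r → Fin (r - 1) → Fin 4 → ℝ) (α β : ℝ) (i j : Fin r) (k : Fin 4) :
    Sab c0 c1 α β (i, j, k, 0) = α * f0 c0 j k i.val := by simp [Sab]

lemma Sab_apply1 {r : ℕ} (c0 : Fin (r - 1) → Fin r → Fin 4 → ℝ)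
    (c1 : Fin r → Fin (r - 1) → Fin 4 → ℝ) (α β : ℝ) (i j : Fin r) (k : Fin 4) :
    Sab c0 c1 α β (i, j, k, 1) = β * f1 c1 i k j.val := by
  simp [Sab, Fin.ext_iff]

lemma Sab_pm {r : ℕ} (c0 : Fin (r - 1) → Fin r → Fin 4 → ℝ)
    (c1 : Fin r → Fin (r - 1) → Fin 4 → ℝ) {α β : ℝ}
    (hα : α = 1 ∨ α = -1) (hβ : β = 1 ∨ β = -1) : IsPM (Sab c0 c1 α β) := by
  intro v
  unfold Sab
  split
  · exact mul_pm hα (f0_pm _ _ _ _)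
  · exact mul_pm hβ (f1_pm _ _ _ _)

lemma IsingH_Sab {r : ℕ} (c0 : Fin (r - 1) → Fin r → Fin 4 → ℝ)
    (c1 : Fin r → Fin (r - 1) → Fin 4 → ℝ)
    (c01 : Fin r → Fin r → Fin 4 → Fin 4 → ℝ)
    (d : ChimeraVertex r → ℝ) (α β : ℝ) (hα : α * α = 1) (hβ : β * β = 1) :
    IsingH c0 c1 c01 d (Sab c0 c1 α β) =
      -(∑ i, ∑ j, ∑ k, |c0 i j k|) - (∑ i, ∑ j, ∑ k, |c1 i j k|)
      + α * β * (∑ i, ∑ j, ∑ k0, ∑ k1,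
          c01 i j k0 k1 * (f0 c0 j k0 i.val * f1 c1 i k1 j.val))
      + (α * (∑ i : Fin r, ∑ j : Fin r, ∑ k : Fin 4, d (i, j, k, 0) * f0 c0 j k i.val)
        + β * (∑ i : Fin r, ∑ j : Fin r, ∑ k : Fin 4, d (i, j, k, 1) * f1 c1 i k j.val)) := by
  have eq0 : (∑ i, ∑ j, ∑ k, c0 i j k *
      (Sab c0 c1 α β (lowRow i, j, k, 0) * Sab c0 c1 α β (highRow i, j, k, 0)))
      = -(∑ i, ∑ j, ∑ k, |c0 i j k|) := by
    rw [← Finset.sum_neg_distrib]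
    refine Finset.sum_congr rfl fun i _ => ?_
    rw [← Finset.sum_neg_distrib]
    refine Finset.sum_congr rfl fun j _ => ?_
    rw [← Finset.sum_neg_distrib]
    refine Finset.sum_congr rfl fun k _ => ?_
    rw [Sab_apply0, Sab_apply0]
    have hlow : (lowRow i).val = i.val := rfl
    have hhigh : (highRow i).val = i.val + 1 := rfl
    rw [hlow, hhigh]
    calc c0 i j k * (α * f0 c0 j k i.val * (α * f0 c0 j k (i.val + 1)))
        = (α * α) * (c0 i j k * (f0 c0 j k i.val * f0 c0 j k (i.val + 1))) := by ring
      _ = -|c0 i j k| := by rw [hα, one_mul, f0_step, g_mul]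
  have eq1 : (∑ i, ∑ j, ∑ k, c1 i j k *
      (Sab c0 c1 α β (i, lowRow j, k, 1) * Sab c0 c1 α β (i, highRow j, k, 1)))
      = -(∑ i, ∑ j, ∑ k, |c1 i j k|) := by
    rw [← Finset.sum_neg_distrib]
    refine Finset.sum_congr rfl fun i _ => ?_
    rw [← Finset.sum_neg_distrib]
    refine Finset.sum_congr rfl fun j _ => ?_
    rw [← Finset.sum_neg_distrib]
    refine Finset.sum_congr rfl fun k _ => ?_
    rw [Sab_apply1, Sab_apply1]
    have hlow : (lowRow j).val = j.val := rfl
    have hhigh : (highRow j).val = j.val + 1 := rfl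
    rw [hlow, hhigh]
    calc c1 i j k * (β * f1 c1 i k j.val * (β * f1 c1 i k (j.val + 1)))
        = (β * β) * (c1 i j k * (f1 c1 i k j.val * f1 c1 i k (j.val + 1))) := by ring
      _ = -|c1 i j k| := by rw [hβ, one_mul, f1_step, g_mul]
  have eq01 : (∑ i, ∑ j, ∑ k0, ∑ k1, c01 i j k0 k1 *
      (Sab c0 c1 α β (i, j, k0, 0) * Sab c0 c1 α β (i, j, k1, 1)))
      = α * β * (∑ i, ∑ j, ∑ k0, ∑ k1,
          c01 i j k0 k1 * (f0 c0 j k0 i.val * f1 c1 i k1 j.val)) := by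
    simp only [Finset.mul_sum]
    refine Finset.sum_congr rfl fun i _ => Finset.sum_congr rfl fun j _ =>
      Finset.sum_congr rfl fun k0 _ => Finset.sum_congr rfl fun k1 _ => ?_
    rw [Sab_apply0, Sab_apply1]
    ring
  have eqd : (∑ v, d v * Sab c0 c1 α β v)
      = α * (∑ i : Fin r, ∑ j : Fin r, ∑ k : Fin 4, d (i, j, k, 0) * f0 c0 j k i.val)
        + β * (∑ i : Fin r, ∑ j : Fin r, ∑ k : Fin 4, d (i, j, k, 1) * f1 c1 i k j.val) := by
    simp only [Fintype.sum_prod_type, Fin.sum_univ_two, Sab_apply0, Sab_apply1,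
      Finset.mul_sum, ← Finset.sum_add_distrib]
    refine Finset.sum_congr rfl fun i _ => Finset.sum_congr rfl fun j _ =>
      Finset.sum_congr rfl fun k _ => ?_
    ring
  show (∑ i, ∑ j, ∑ k, c0 i j k *
      (Sab c0 c1 α β (lowRow i, j, k, 0) * Sab c0 c1 α β (highRow i, j, k, 0)))
      + (∑ i, ∑ j, ∑ k, c1 i j k *
      (Sab c0 c1 α β (i, lowRow j, k, 1) * Sab c0 c1 α β (i, highRow j, k, 1)))
      + (∑ i, ∑ j, ∑ k0, ∑ k1, c01 i j k0 k1 *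
      (Sab c0 c1 α β (i, j, k0, 0) * Sab c0 c1 α β (i, j, k1, 1)))
      + (∑ v, d v * Sab c0 c1 α β v) = _
  rw [eq0, eq1, eq01, eqd]
  ring

lemma Hstar_le {r : ℕ} (c0 : Fin (r - 1) → Fin r → Fin 4 → ℝ)
    (c1 : Fin r → Fin (r - 1) → Fin 4 → ℝ)
    (c01 : Fin r → Fin r → Fin 4 → Fin 4 → ℝ)
    (d : ChimeraVertex r → ℝ) (Sopt : ChimeraVertex r → ℝ)
    (hmin : ∀ S : ChimeraVertex r → ℝ, IsPM S →
      IsingH c0 c1 c01 d Sopt ≤ IsingH c0 c1 c01 d S) :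
    IsingH c0 c1 c01 d Sopt
      ≤ -((∑ i, ∑ j, ∑ k, |c0 i j k|) + (∑ i, ∑ j, ∑ k, |c1 i j k|)) := by
  have h1 := hmin (Sab c0 c1 1 1) (Sab_pm c0 c1 (Or.inl rfl) (Or.inl rfl))
  have h2 := hmin (Sab c0 c1 1 (-1)) (Sab_pm c0 c1 (Or.inl rfl) (Or.inr rfl))
  have h3 := hmin (Sab c0 c1 (-1) 1) (Sab_pm c0 c1 (Or.inr rfl) (Or.inl rfl))
  have h4 := hmin (Sab c0 c1 (-1) (-1)) (Sab_pm c0 c1 (Or.inr rfl) (Or.inr rfl))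
  rw [IsingH_Sab c0 c1 c01 d 1 1 (by norm_num) (by norm_num)] at h1
  rw [IsingH_Sab c0 c1 c01 d 1 (-1) (by norm_num) (by norm_num)] at h2
  rw [IsingH_Sab c0 c1 c01 d (-1) 1 (by norm_num) (by norm_num)] at h3
  rw [IsingH_Sab c0 c1 c01 d (-1) (-1) (by norm_num) (by norm_num)] at h4
  ring_nf at h1 h2 h3 h4
  linarith

lemma abs_Hk0_le {r : ℕ} (c0 : Fin (r - 1) → Fin r → Fin 4 → ℝ) (T kk : ℕ)
    (S : ChimeraVertex r → ℝ) (hS : IsPM S) :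
    |Hk0 c0 T kk S| ≤ Ak0 c0 T kk := by
  unfold Hk0 Ak0
  refine (Finset.abs_sum_le_sum_abs _ _).trans (Finset.sum_le_sum fun i _ => ?_)
  refine (Finset.abs_sum_le_sum_abs _ _).trans (Finset.sum_le_sum fun j _ => ?_)
  refine (Finset.abs_sum_le_sum_abs _ _).trans (Finset.sum_le_sum fun k _ => ?_)
  split
  · have h1 : |S (lowRow i, j, k, 0) * S (highRow i, j, k, 0)| = 1 := by
      rcases hS (lowRow i, j, k, 0) with h | h <;> rcases hS (highRow i, j, k, 0) with h' | h' <;>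
        simp [h, h']
    rw [abs_mul, h1, mul_one]
  · simp

lemma sum_Ak0 {r : ℕ} (c0 : Fin (r - 1) → Fin r → Fin 4 → ℝ) (T : ℕ) (hT : 2 ≤ T) :
    ∑ kk ∈ Finset.range T, Ak0 c0 T kk = 2 * (∑ i, ∑ j, ∑ k, |c0 i j k|) := by
  unfold Ak0
  rw [Finset.sum_comm]
  rw [Finset.mul_sum]
  refine Finset.sum_congr rfl fun i _ => ?_
  rw [Finset.sum_comm, Finset.mul_sum]
  refine Finset.sum_congr rfl fun j _ => ?_
  rw [Finset.sum_comm, Finset.mul_sum]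
  refine Finset.sum_congr rfl fun k _ => ?_
  have hT0 : 0 < T := by omega
  set a := (i.val + 1) % T with hA
  set b := (i.val + 2) % T with hB
  have ha : a < T := Nat.mod_lt _ hT0
  have hb : b < T := Nat.mod_lt _ hT0
  have hab : a ≠ b := by
    intro h
    have : T ∣ (i.val + 2) - (i.val + 1) :=
      (Nat.modEq_iff_dvd' (by omega)).mp h
    simp at this
    omega
  have key : ∀ kk : ℕ, (if InEk0 T kk i then |c0 i j k| else 0)
      = (if kk = a then |c0 i j k| else 0) + (if kk = b then |c0 i j k| else 0) := by
    intro kk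
    have hE : InEk0 T kk i ↔ (a = kk ∨ b = kk) := Iff.rfl
    rcases eq_or_ne kk a with h1 | h1 <;> rcases eq_or_ne kk b with h2 | h2
    · exact absurd (h1.symm.trans h2) hab
    · rw [if_pos (hE.mpr (Or.inl h1.symm)), if_pos h1, if_neg h2, add_zero]
    · rw [if_pos (hE.mpr (Or.inr h2.symm)), if_neg h1, if_pos h2, zero_add]
    · rw [if_neg (fun h => (hE.mp h).elim (fun h' => h1 h'.symm) (fun h' => h2 h'.symm)),
        if_neg h1, if_neg h2, add_zero]
  simp only [key, Finset.sum_add_distrib, Finset.sum_ite_eq' (Finset.range T),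
    Finset.mem_range]
  rw [if_pos ha, if_pos hb]
  ring

end Stmt14Aux

/-- combinatorial core of Theorem 1: if `A_0 ≤ A_1` and `T ≥ 2`, then
there exists `kk < T` such that every minimizer `S'` of `H_{sub,kk}` satisfies
`H* ≤ H(S') ≤ (1 - 2/T)·H*`, i.e. `S'` is a `(1 - 2/T)`-approximate minimizer of `H`. -/
theorem stmt14 (r : ℕ) (hr : 1 ≤ r)
    (c0 : Fin (r - 1) → Fin r → Fin 4 → ℝ)
    (c1 : Fin r → Fin (r - 1) → Fin 4 → ℝ)
    (c01 : Fin r → Fin r → Fin 4 → Fin 4 → ℝ)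
    (d : ChimeraVertex r → ℝ)
    (hA : (∑ i, ∑ j, ∑ k, |c0 i j k|) ≤ (∑ i, ∑ j, ∑ k, |c1 i j k|))
    (T : ℕ) (hT : 2 ≤ T)
    (Sopt : ChimeraVertex r → ℝ) (hSopt : IsPM Sopt)
    (hmin : ∀ S : ChimeraVertex r → ℝ, IsPM S →
      IsingH c0 c1 c01 d Sopt ≤ IsingH c0 c1 c01 d S) :
    ∃ kk < T, ∀ S' : ChimeraVertex r → ℝ, IsPM S' →
      (∀ S : ChimeraVertex r → ℝ, IsPM S →
        Hsub c0 c1 c01 d T kk S' ≤ Hsub c0 c1 c01 d T kk S) →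
      IsingH c0 c1 c01 d Sopt ≤ IsingH c0 c1 c01 d S'
      ∧ IsingH c0 c1 c01 d S' ≤ (1 - 2 / (T : ℝ)) * IsingH c0 c1 c01 d Sopt := by
  classical
  set A0 := (∑ i, ∑ j, ∑ k, |c0 i j k|) with hA0
  set A1 := (∑ i, ∑ j, ∑ k, |c1 i j k|) with hA1
  set Hst := IsingH c0 c1 c01 d Sopt with hHst
  have hTpos : (0 : ℝ) < (T : ℝ) := by
    have : 0 < T := by omega
    exact_mod_cast this
  have hTne : (T : ℝ) ≠ 0 := ne_of_gt hTpos
  have hHstar : Hst ≤ -(A0 + A1) := Stmt14Aux.Hstar_le c0 c1 c01 d Sopt hmin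
  have h2A0 : 2 * A0 ≤ -Hst := by linarith
  have hsum : ∑ kk ∈ Finset.range T, Ak0 c0 T kk = 2 * A0 := Stmt14Aux.sum_Ak0 c0 T hT
  obtain ⟨kk, hkkmem, hAk⟩ : ∃ kk ∈ Finset.range T, Ak0 c0 T kk ≤ 2 * A0 / T := by
    by_contra hcon
    push_neg at hcon
    have hlt : ∑ _kk ∈ Finset.range T, (2 * A0 / T) < ∑ kk ∈ Finset.range T, Ak0 c0 T kk :=
      Finset.sum_lt_sum_of_nonempty (by simp; omega) (fun kk hk => hcon kk hk)
    have hconst : ∑ _kk ∈ Finset.range T, (2 * A0 / T) = 2 * A0 := by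
      rw [Finset.sum_const, Finset.card_range, nsmul_eq_mul]
      field_simp
    rw [hconst, hsum] at hlt
    exact absurd hlt (lt_irrefl _)
  refine ⟨kk, Finset.mem_range.mp hkkmem, ?_⟩
  intro S' hS' hminS'
  refine ⟨hmin S' hS', ?_⟩
  have e1 : Hsub c0 c1 c01 d T kk S' ≤ Hsub c0 c1 c01 d T kk Sopt := hminS' Sopt hSopt
  unfold Hsub at e1
  have b1 := Stmt14Aux.abs_Hk0_le c0 T kk S' hS'
  have b2 := Stmt14Aux.abs_Hk0_le c0 T kk Sopt hSopt
  rw [abs_le] at b1 b2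
  have hup : IsingH c0 c1 c01 d S' ≤ Hst + 2 * (2 * A0 / T) := by
    linarith [e1, b1.2, b2.1, hAk]
  have heq : 2 * (2 * A0 / T) = (4 * A0) / (T : ℝ) := by ring
  have hdiv : (4 * A0) / (T : ℝ) ≤ (-(2 * Hst)) / (T : ℝ) :=
    by apply div_le_div_of_nonneg_right <;> first | linarith | exact hTpos
  have hfinal : Hst + (-(2 * Hst)) / (T : ℝ) = (1 - 2 / (T : ℝ)) * Hst := by
    field_simp
    ring
  linarith
end
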